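/- arXiv:1912.06651 — 2 statements merged into one kernel-verified Lean document; each statement's English description precedes it below -/
import Mathlib

section
/- For 0 ≤ r < k and n ≥ 1, x^r · det((C(i-k+1+r, i-j)·x^k + C(i+1+r, i-j+1))_{i,j=0}^{n-1}) = F^{(k)}_{kn+r}(x). -/
set_option maxHeartbeats 1000000

/-- Generalized binomial coefficient `C(a,b)` for integer `a`, with `C(a,b) = 0` for `b < 0`. -/
noncomputable def gchoose (a b : ℤ) : ℤ :=
  if 0 ≤ b then Ring.choose a b.toNat else 0

/-- Generalized Fibonacci polynomials
`F^{(k)}_m(x) = ∑_{j=0}^{⌊m/k⌋} C(m-(k-1)j, j) x^{m-kj}`. -/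
noncomputable def genFib (k m : ℕ) (x : ℝ) : ℝ :=
  ∑ j ∈ Finset.range (m / k + 1),
    (Nat.choose (m - (k - 1) * j) j : ℝ) * x ^ (m - k * j)

lemma gchoose_neg {a b : ℤ} (h : b < 0) : gchoose a b = 0 := by
  simp [gchoose, not_le.2 h]

lemma gchoose_zero (a : ℤ) : gchoose a 0 = 1 := by
  simp [gchoose, Ring.choose_zero_right]

lemma gchoose_natCast (n : ℕ) (b : ℤ) (hb : 0 ≤ b) :
    gchoose (n : ℤ) b = (n.choose b.toNat : ℤ) := by
  simp [gchoose, hb, Ring.choose_natCast]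

lemma descPochhammer_eval_reflect (b : ℕ) (a : ℤ) :
    (descPochhammer ℤ b).eval a = (-1)^b * (descPochhammer ℤ b).eval ((b : ℤ) - a - 1) := by
  induction b generalizing a with
  | zero => simp
  | succ b ih =>
    have h1 : (descPochhammer ℤ (b+1)).eval a = a * (descPochhammer ℤ b).eval (a - 1) := by
      rw [descPochhammer_succ_left]
      simp [Polynomial.eval_comp]
    have h2 : (descPochhammer ℤ (b+1)).eval (((b:ℤ)+1) - a - 1)
        = (descPochhammer ℤ b).eval ((b:ℤ) - a) * (((b:ℤ) - a) - b) := by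
      rw [descPochhammer_succ_right]
      simp [Polynomial.eval_mul]
      ring_nf
    have h3 := ih (a - 1)
    have hb : (b:ℤ) - (a - 1) - 1 = (b:ℤ) - a := by ring
    rw [hb] at h3
    have : ((b:ℤ)+1) = ((b+1 : ℕ) : ℤ) := by push_cast; ring
    rw [← this] at *
    rw [h1, h2, h3]
    ring

lemma ring_choose_smeval (a : ℤ) (b : ℕ) :
    (b.factorial : ℤ) * Ring.choose a b = (descPochhammer ℤ b).eval a := by
  have := Ring.descPochhammer_eq_factorial_smul_choose (R := ℤ) a b
  rw [← Polynomial.eval_eq_smeval] at this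
  rw [this, nsmul_eq_mul]

lemma ring_choose_reflect (a : ℤ) (b : ℕ) :
    Ring.choose a b = (-1)^b * Ring.choose ((b:ℤ) - a - 1) b := by
  have hf : (b.factorial : ℤ) ≠ 0 := Int.natCast_ne_zero.2 (Nat.factorial_ne_zero b)
  apply mul_left_cancel₀ hf
  rw [ring_choose_smeval, descPochhammer_eval_reflect b a, mul_left_comm, ring_choose_smeval]

lemma gchoose_reflect (a : ℤ) (b : ℕ) :
    gchoose a (b : ℤ) = (-1)^b * gchoose ((b:ℤ) - a - 1) (b : ℤ) := by
  simp only [gchoose, Int.le_def, if_pos (Int.natCast_nonneg b), Int.toNat_natCast]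
  exact ring_choose_reflect a b

lemma gchoose_nat_eq (a : ℤ) (b : ℕ) : gchoose a (b : ℤ) = Ring.choose a b := by
  simp [gchoose]

lemma gchoose_vandermonde (a b c : ℤ) (M : ℕ) (hc : c ≤ M) :
    ∑ m ∈ Finset.range (M+1), gchoose a (m : ℤ) * gchoose b (c - m) = gchoose (a+b) c := by
  rcases lt_or_ge c 0 with h | h
  · rw [gchoose_neg h]
    refine Finset.sum_eq_zero fun m _ => ?_
    rw [gchoose_neg (by omega : c - (m:ℤ) < 0), mul_zero]
  · set cn := c.toNat with hcn
    have hccn : c = (cn : ℤ) := by omega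
    have hcnM : cn ≤ M := by omega
    have hv := Ring.add_choose_eq (R := ℤ) (r := a) (s := b) cn (Commute.all a b)
    rw [Finset.Nat.sum_antidiagonal_eq_sum_range_succ_mk] at hv
    have : ∑ m ∈ Finset.range (M+1), gchoose a (m : ℤ) * gchoose b (c - m)
        = ∑ m ∈ Finset.range (cn+1), Ring.choose a m * Ring.choose b (cn - m) := by
      rw [← Finset.sum_subset (Finset.range_subset_range.2 (by omega : cn + 1 ≤ M + 1))]
      · refine Finset.sum_congr rfl fun m hm => ?_
        have hm' : m ≤ cn := by simpa [Nat.lt_succ_iff] using hm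
        rw [gchoose_nat_eq]
        congr 1
        have : c - (m:ℤ) = ((cn - m : ℕ) : ℤ) := by omega
        rw [this, gchoose_nat_eq]
      · intro m hm hm'
        have : cn < m := by
          simp only [Finset.mem_range] at hm hm' ⊢; omega
        rw [gchoose_neg (by omega : c - (m:ℤ) < 0), mul_zero]
    rw [this, ← hv, hccn, gchoose_nat_eq]

lemma gchoose_alt_conv (a b : ℤ) (M s : ℕ) :
    ∑ j ∈ Finset.range (M+1), (-1)^(M+j) * gchoose a ((M:ℤ) - j) * gchoose (b + j) ((j:ℤ) - s)
      = (-1)^(M+s) * gchoose (a - b - (s:ℤ) - 1) ((M:ℤ) - s) := by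
  have step1 : ∀ j : ℕ, (-1:ℤ)^(M+j) * gchoose a ((M:ℤ) - j) * gchoose (b + j) ((j:ℤ) - s)
      = (-1)^(M+s) * (gchoose a ((M:ℤ) - j) * gchoose (-(s:ℤ) - b - 1) ((j:ℤ) - s)) := by
    intro j
    rcases lt_or_ge j s with h | h
    · rw [gchoose_neg (by omega : (j:ℤ) - s < 0), gchoose_neg (by omega : (j:ℤ) - s < 0)]
      ring
    · obtain ⟨β, rfl⟩ : ∃ β : ℕ, j = s + β := ⟨j - s, by omega⟩
      push_cast
      have hβ : (s:ℤ) + β - s = (β : ℤ) := by ring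
      rw [hβ]
      have := gchoose_reflect (b + ((s:ℤ)+β)) β
      have he : (β:ℤ) - (b + ((s:ℤ)+β)) - 1 = -(s:ℤ) - b - 1 := by ring
      rw [he] at this
      rw [this]
      have : (-1:ℤ)^(M + (s + β)) = (-1)^(M+s) * (-1)^β := by
        rw [← pow_add]; ring_nf
      rw [this]
      ring_nf
      simp [neg_one_sq]
  rw [Finset.sum_congr rfl fun j _ => step1 j, ← Finset.mul_sum]
  congr 1
  have hrefl := Finset.sum_range_reflect
    (fun j => gchoose a ((M:ℤ) - j) * gchoose (-(s:ℤ) - b - 1) ((j:ℤ) - s)) (M+1)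
  simp only [Nat.add_sub_cancel] at hrefl
  rw [← hrefl]
  have : ∀ j ∈ Finset.range (M+1),
      gchoose a ((M:ℤ) - ((M - j : ℕ):ℤ)) * gchoose (-(s:ℤ) - b - 1) (((M - j : ℕ):ℤ) - s)
      = gchoose a (j:ℤ) * gchoose (-(s:ℤ) - b - 1) (((M:ℤ) - s) - j) := by
    intro j hj
    have hjM : j ≤ M := by simpa [Nat.lt_succ_iff] using hj
    have h1 : ((M - j : ℕ):ℤ) = (M:ℤ) - j := by omega
    rw [h1]
    ring_nf
  rw [Finset.sum_congr rfl this, gchoose_vandermonde a (-(s:ℤ) - b - 1) ((M:ℤ) - s) M (by omega)]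
  ring_nf

noncomputable def toepDet (t : ℤ → ℝ) (n : ℕ) : ℝ :=
  Matrix.det (Matrix.of fun i j : Fin n => t ((i:ℤ) - (j:ℤ)))

lemma toepDet_zero (t : ℤ → ℝ) : toepDet t 0 = 1 := by
  simp [toepDet, Matrix.det_fin_zero]

lemma toepDet_minor (t : ℤ → ℝ) (h1 : t (-1) = 1) (h0 : ∀ d : ℤ, d < -1 → t d = 0)
    (n : ℕ) (j : Fin (n+1)) :
    Matrix.det ((Matrix.of fun i j : Fin (n+1) => t ((i:ℤ) - (j:ℤ))).submatrix
      Fin.castSucc j.succAbove) = toepDet t (j:ℕ) := by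
  set J := (j : ℕ) with hJdef
  have hJ : J + (n - J) = n := by omega
  let e : Fin J ⊕ Fin (n - J) ≃ Fin n := finSumFinEquiv.trans (finCongr hJ)
  set M := (Matrix.of fun i j : Fin (n+1) => t ((i:ℤ) - (j:ℤ))).submatrix
      Fin.castSucc j.succAbove with hM
  have hsa : ∀ c : Fin n, ((j.succAbove c : Fin (n+1)) : ℕ) = if (c:ℕ) < J then (c:ℕ) else (c:ℕ)+1 := by
    intro c
    rcases lt_or_ge ((c:ℕ)) J with h | h
    · rw [if_pos h, Fin.succAbove_of_castSucc_lt]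
      · rfl
      · rwa [Fin.lt_iff_val_lt_val]
    · rw [if_neg (not_lt.2 h), Fin.succAbove_of_le_castSucc]
      · rfl
      · rwa [Fin.le_iff_val_le_val]
  have key : M.submatrix e e = Matrix.fromBlocks
      (Matrix.of fun p q : Fin J => t ((p:ℤ) - q))
      0
      (Matrix.of fun (p : Fin (n-J)) (q : Fin J) => t ((J:ℤ) + p - q))
      (Matrix.of fun p q : Fin (n-J) => t ((p:ℤ) - q - 1)) := by
    ext pq rs
    cases pq with
    | inl p =>
      cases rs with
      | inl q =>
        have hq : ((e (Sum.inl q) : Fin n) : ℕ) = (q : ℕ) := by simp [e]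
        simp only [Matrix.submatrix_apply, hM, Matrix.fromBlocks_apply₁₁, Matrix.of_apply]
        have : ((j.succAbove (e (Sum.inl q)) : Fin (n+1)) : ℕ) = (q:ℕ) := by
          rw [hsa, hq, if_pos q.isLt]
        rw [Fin.coe_castSucc]
        rw [this]
        simp [e]
      | inr q =>
        have hq : ((e (Sum.inr q) : Fin n) : ℕ) = J + (q : ℕ) := by simp [e]
        simp only [Matrix.submatrix_apply, hM, Matrix.fromBlocks_apply₁₂, Matrix.of_apply]
        have : ((j.succAbove (e (Sum.inr q)) : Fin (n+1)) : ℕ) = J + (q:ℕ) + 1 := by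
          rw [hsa, hq, if_neg (by omega)]
        rw [Fin.coe_castSucc, this]
        have hp : ((e (Sum.inl p) : Fin n) : ℕ) = (p : ℕ) := by simp [e]
        rw [hp]
        have hplt : (p : ℕ) < J := p.isLt
        simp only [Matrix.zero_apply]
        apply h0
        push_cast
        omega
    | inr p =>
      cases rs with
      | inl q =>
        have hp : ((e (Sum.inr p) : Fin n) : ℕ) = J + (p : ℕ) := by simp [e]
        have hq : ((e (Sum.inl q) : Fin n) : ℕ) = (q : ℕ) := by simp [e]
        simp only [Matrix.submatrix_apply, hM, Matrix.fromBlocks_apply₂₁, Matrix.of_apply]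
        have : ((j.succAbove (e (Sum.inl q)) : Fin (n+1)) : ℕ) = (q:ℕ) := by
          rw [hsa, hq, if_pos q.isLt]
        rw [Fin.coe_castSucc, this, hp]
        push_cast
        ring_nf
      | inr q =>
        have hp : ((e (Sum.inr p) : Fin n) : ℕ) = J + (p : ℕ) := by simp [e]
        have hq : ((e (Sum.inr q) : Fin n) : ℕ) = J + (q : ℕ) := by simp [e]
        simp only [Matrix.submatrix_apply, hM, Matrix.fromBlocks_apply₂₂, Matrix.of_apply]
        have : ((j.succAbove (e (Sum.inr q)) : Fin (n+1)) : ℕ) = J + (q:ℕ) + 1 := by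
          rw [hsa, hq, if_neg (by omega)]
        rw [Fin.coe_castSucc, this, hp]
        push_cast
        ring_nf
  have hdet : M.det = (M.submatrix e e).det := (Matrix.det_submatrix_equiv_self e M).symm
  rw [hdet, key, Matrix.det_fromBlocks_zero₁₂]
  have h22 : (Matrix.of fun p q : Fin (n-J) => t ((p:ℤ) - q - 1)).det = 1 := by
    rw [Matrix.det_of_lowerTriangular]
    · refine Finset.prod_eq_one fun p _ => ?_
      simp only [Matrix.diag_apply, Matrix.of_apply]
      rw [show ((p:ℤ) - p - 1) = -1 by ring, h1]
    · intro u v huv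
      simp only [Matrix.of_apply]
      apply h0
      have : (u : ℕ) < (v : ℕ) := huv
      push_cast
      omega
  rw [h22, mul_one]
  rfl

lemma toepDet_succ (t : ℤ → ℝ) (h1 : t (-1) = 1) (h0 : ∀ d : ℤ, d < -1 → t d = 0) (n : ℕ) :
    toepDet t (n+1) = ∑ j ∈ Finset.range (n+1), (-1)^(n+j) * t ((n:ℤ) - j) * toepDet t j := by
  rw [toepDet, Matrix.det_succ_row _ (Fin.last n)]
  have hterm : ∀ j : Fin (n+1),
      (-1:ℝ)^((Fin.last n : ℕ) + (j:ℕ)) * (Matrix.of fun i j : Fin (n+1) => t ((i:ℤ) - (j:ℤ))) (Fin.last n) j *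
        ((Matrix.of fun i j : Fin (n+1) => t ((i:ℤ) - (j:ℤ))).submatrix (Fin.last n).succAbove j.succAbove).det
      = (-1)^(n + (j:ℕ)) * t ((n:ℤ) - (j:ℕ)) * toepDet t (j:ℕ) := by
    intro j
    rw [Fin.succAbove_last, toepDet_minor t h1 h0 n j]
    simp [Fin.val_last]
  rw [Finset.sum_congr rfl fun j _ => hterm j]
  exact Fin.sum_univ_eq_sum_range (fun j => (-1:ℝ)^(n+j) * t ((n:ℤ) - j) * toepDet t j) (n+1)

lemma gchoose_of_nat (i m : ℕ) : gchoose (i:ℤ) (m:ℤ) = (i.choose m : ℤ) := by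
  rw [gchoose_nat_eq, Ring.choose_natCast]

lemma W_lemma (i : ℕ) (c w : ℤ) (hw : w ≤ 1) :
    ∑ m ∈ Finset.range (i+1), (i.choose m : ℤ) * gchoose c (w + m)
      = gchoose ((i:ℤ) + c) (w + i) := by
  have hrefl := Finset.sum_range_reflect
    (fun m => (i.choose m : ℤ) * gchoose c (w + m)) (i+1)
  simp only [Nat.add_sub_cancel] at hrefl
  rw [← hrefl]
  have hcongr : ∀ m ∈ Finset.range (i+1),
      (i.choose (i - m) : ℤ) * gchoose c (w + ((i - m : ℕ):ℤ))
      = gchoose (i:ℤ) (m:ℤ) * gchoose c ((w + i) - m) := by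
    intro m hm
    have hmi : m ≤ i := by simpa [Nat.lt_succ_iff] using hm
    rw [Nat.choose_symm hmi, gchoose_of_nat]
    congr 2
    omega
  rw [Finset.sum_congr rfl hcongr]
  rcases lt_or_ge w 1 with h | h
  · exact gchoose_vandermonde (i:ℤ) c (w + i) i (by omega)
  · have hw1 : w = 1 := le_antisymm hw h
    subst hw1
    have hext : ∑ m ∈ Finset.range (i+2), gchoose (i:ℤ) (m:ℤ) * gchoose c ((1 + i) - m)
        = ∑ m ∈ Finset.range (i+1), gchoose (i:ℤ) (m:ℤ) * gchoose c ((1 + i) - m) := by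
      rw [Finset.sum_range_succ]
      have : gchoose (i:ℤ) ((i+1 : ℕ):ℤ) = 0 := by
        rw [gchoose_of_nat, Nat.choose_succ_self, Nat.cast_zero]
      push_cast at this ⊢
      rw [this, zero_mul, add_zero]
    rw [← hext, gchoose_vandermonde (i:ℤ) c (1 + i) (i+1) (by omega)]

noncomputable def tfun (k r : ℕ) (x : ℝ) (d : ℤ) : ℝ :=
  ((gchoose ((r:ℤ)+1-k) d : ℤ) : ℝ) * x^k + ((gchoose ((r:ℤ)+1) (d+1) : ℤ) : ℝ)

lemma tfun_neg_one (k r : ℕ) (x : ℝ) : tfun k r x (-1) = 1 := by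
  simp only [tfun]
  rw [gchoose_neg (by norm_num : (-1:ℤ) < 0), show (-1:ℤ) + 1 = 0 by ring, gchoose_zero]
  norm_num

lemma tfun_lt_neg_one (k r : ℕ) (x : ℝ) (d : ℤ) (hd : d < -1) : tfun k r x d = 0 := by
  simp only [tfun]
  rw [gchoose_neg (show d < 0 by omega), gchoose_neg (show d + 1 < 0 by omega)]
  norm_num

lemma Wr (i : ℕ) (c w : ℤ) (hw : w ≤ 1) :
    ∑ m ∈ Finset.range (i+1), ((i.choose m : ℝ)) * ((gchoose c ((m:ℤ) + w) : ℤ) : ℝ)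
      = ((gchoose ((i:ℤ)+c) ((i:ℤ)+w) : ℤ):ℝ) := by
  have h := W_lemma i c w hw
  simp_rw [show ∀ m : ℤ, w + m = m + w from fun m => add_comm w m] at h
  have h' := congrArg (fun z : ℤ => (z : ℝ)) h
  push_cast at h'
  exact h'

lemma detA_eq_toepDet (k r n : ℕ) (x : ℝ) :
    Matrix.det (Matrix.of fun i j : Fin n =>
        (gchoose ((i : ℤ) - (k : ℤ) + 1 + (r : ℤ)) ((i : ℤ) - (j : ℤ)) : ℝ) * x ^ k +
        (gchoose ((i : ℤ) + 1 + (r : ℤ)) ((i : ℤ) - (j : ℤ) + 1) : ℝ))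
      = toepDet (tfun k r x) n := by
  set L : Matrix (Fin n) (Fin n) ℝ := Matrix.of fun i j : Fin n => ((i:ℕ).choose (j:ℕ) : ℝ) with hL
  set T : Matrix (Fin n) (Fin n) ℝ := Matrix.of fun i j : Fin n => tfun k r x ((i:ℤ) - (j:ℤ)) with hT
  have hLT : (Matrix.of fun i j : Fin n =>
        (gchoose ((i : ℤ) - (k : ℤ) + 1 + (r : ℤ)) ((i : ℤ) - (j : ℤ)) : ℝ) * x ^ k +
        (gchoose ((i : ℤ) + 1 + (r : ℤ)) ((i : ℤ) - (j : ℤ) + 1) : ℝ)) = L * T := by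
    ext i j
    rw [Matrix.mul_apply]
    have hfin : ∑ m : Fin n, L i m * T m j
        = ∑ m ∈ Finset.range n, ((i:ℕ).choose m : ℝ) * tfun k r x ((m:ℤ) - (j:ℤ)) :=
      Fin.sum_univ_eq_sum_range (fun m => ((i:ℕ).choose m : ℝ) * tfun k r x ((m:ℤ) - (j:ℤ))) n
    rw [hfin]
    have hshrink : ∑ m ∈ Finset.range n, ((i:ℕ).choose m : ℝ) * tfun k r x ((m:ℤ) - (j:ℤ))
        = ∑ m ∈ Finset.range ((i:ℕ)+1), ((i:ℕ).choose m : ℝ) * tfun k r x ((m:ℤ) - (j:ℤ)) := by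
      rw [← Finset.sum_subset (Finset.range_subset_range.2 (by omega : (i:ℕ) + 1 ≤ n))]
      intro m hm hm'
      have : (i:ℕ) < m := by simp only [Finset.mem_range] at hm hm'; omega
      rw [Nat.choose_eq_zero_of_lt this, Nat.cast_zero, zero_mul]
    rw [hshrink]
    simp only [tfun, Matrix.of_apply]
    have e1 : ∑ m ∈ Finset.range ((i:ℕ)+1),
        ((i:ℕ).choose m : ℝ) * (((gchoose ((r:ℤ)+1-k) ((m:ℤ) - (j:ℤ)) : ℤ) : ℝ) * x^k)
        = ((gchoose ((i:ℤ) - (k:ℤ) + 1 + (r:ℤ)) ((i:ℤ) - (j:ℤ)) : ℤ) : ℝ) * x^k := by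
      have h := Wr (i:ℕ) ((r:ℤ)+1-k) (-(j:ℤ)) (by omega)
      simp_rw [← sub_eq_add_neg] at h
      rw [show (i:ℤ) + ((r:ℤ) + 1 - k) = (i:ℤ) - k + 1 + r from by ring] at h
      simp_rw [← mul_assoc]
      rw [← Finset.sum_mul, h]
    have e2 : ∑ m ∈ Finset.range ((i:ℕ)+1),
        ((i:ℕ).choose m : ℝ) * ((gchoose ((r:ℤ)+1) ((m:ℤ) - (j:ℤ) + 1) : ℤ) : ℝ)
        = ((gchoose ((i:ℤ) + 1 + (r:ℤ)) ((i:ℤ) - (j:ℤ) + 1) : ℤ) : ℝ) := by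
      have h := Wr (i:ℕ) ((r:ℤ)+1) (1 - (j:ℤ)) (by omega)
      simp_rw [show ∀ m:ℤ, m + (1 - (j:ℤ)) = m - j + 1 from fun m => by ring] at h
      rw [show (i:ℤ) + ((r:ℤ) + 1) = (i:ℤ) + 1 + r from by ring] at h
      exact h
    simp_rw [mul_add]
    rw [Finset.sum_add_distrib, e1, e2]
  rw [hLT, Matrix.det_mul]
  have hdetL : L.det = 1 := by
    rw [Matrix.det_of_lowerTriangular L]
    · refine Finset.prod_eq_one fun p _ => ?_
      simp [hL, Matrix.diag_apply]
    · intro u v huv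
      have : (u:ℕ) < (v:ℕ) := huv
      simp only [hL, Matrix.of_apply]
      rw [Nat.choose_eq_zero_of_lt this, Nat.cast_zero]
  rw [hdetL, one_mul]
  rfl

lemma alt_conv_r (a b : ℤ) (M s : ℕ) :
    ∑ j ∈ Finset.range (M+1),
      (-1:ℝ)^(M+j) * ((gchoose a ((M:ℤ) - j) : ℤ) : ℝ) * ((gchoose (b + j) ((j:ℤ) - s) : ℤ) : ℝ)
      = (-1:ℝ)^(M+s) * ((gchoose (a - b - (s:ℤ) - 1) ((M:ℤ) - s) : ℤ) : ℝ) := by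
  have h := congrArg (fun z : ℤ => (z : ℝ)) (gchoose_alt_conv a b M s)
  push_cast at h
  exact h

noncomputable def Gfun (k r : ℕ) (x : ℝ) (n : ℕ) : ℝ :=
  ∑ s ∈ Finset.range (n+1),
    ((gchoose (((k:ℤ)-1)*s + r + n) ((n:ℤ) - s) : ℤ) : ℝ) * x^(k*s)

lemma Gfun_zero (k r : ℕ) (x : ℝ) : Gfun k r x 0 = 1 := by
  simp only [Gfun, Finset.range_one, Finset.sum_singleton]
  norm_num
  rw [gchoose_zero]

lemma Gfun_ext (k r : ℕ) (x : ℝ) (n N : ℕ) (h : n ≤ N) :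
    Gfun k r x n = ∑ s ∈ Finset.range (N+1),
      ((gchoose (((k:ℤ)-1)*s + r + n) ((n:ℤ) - s) : ℤ) : ℝ) * x^(k*s) := by
  rw [Gfun, Finset.sum_subset (Finset.range_subset_range.2 (by omega : n + 1 ≤ N + 1))]
  intro s hs hs'
  have : n < s := by simp only [Finset.mem_range] at hs hs'; omega
  rw [gchoose_neg (by omega : (n:ℤ) - s < 0)]
  norm_num

lemma hcancel (k M : ℕ) (x : ℝ) :
    ∑ s ∈ Finset.range (M+2), ((-1:ℝ)^(M+s) * ((gchoose (-(k:ℤ)*((s:ℤ)+1)) ((M:ℤ)-s) : ℤ):ℝ)) * (x^k * x^(k*s))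
      + ∑ s ∈ Finset.range (M+2), ((-1:ℝ)^(M+s) * ((gchoose (-(k:ℤ)*(s:ℤ)) ((M:ℤ)+1-s) : ℤ):ℝ)) * x^(k*s) = 0 := by
  set hf : ℕ → ℝ := fun s => (-1:ℝ)^(M+s) * ((gchoose (-(k:ℤ)*(s:ℤ)) ((M:ℤ)+1-s) : ℤ):ℝ) * x^(k*s) with hhf
  have h1 : ∀ s ∈ Finset.range (M+2),
      ((-1:ℝ)^(M+s) * ((gchoose (-(k:ℤ)*((s:ℤ)+1)) ((M:ℤ)-s) : ℤ):ℝ)) * (x^k * x^(k*s))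
        = -hf (s+1) := by
    intro s _
    simp only [hhf]
    push_cast
    rw [show ((M:ℤ)+1-((s:ℤ)+1)) = (M:ℤ)-s from by ring]
    rw [show M+(s+1) = (M+s)+1 from rfl, pow_succ]
    rw [show k*(s+1) = k + k*s from by ring, pow_add]
    ring
  rw [Finset.sum_congr rfl h1]
  have h2 : ∀ s ∈ Finset.range (M+2),
      ((-1:ℝ)^(M+s) * ((gchoose (-(k:ℤ)*(s:ℤ)) ((M:ℤ)+1-s) : ℤ):ℝ)) * x^(k*s) = hf s := by
    intro s _
    simp only [hhf]
  rw [Finset.sum_congr rfl h2, Finset.sum_neg_distrib]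
  have h3 : ∑ s ∈ Finset.range (M+2), hf (s+1) = ∑ s ∈ Finset.range (M+3), hf s - hf 0 := by
    rw [Finset.sum_range_succ' hf (M+2)]
    ring
  have hf0 : hf 0 = 0 := by
    simp only [hhf]
    rw [show -(k:ℤ)*((0:ℕ):ℤ) = ((0:ℕ):ℤ) from by push_cast; ring,
        show (M:ℤ)+1-((0:ℕ):ℤ) = ((M+1:ℕ):ℤ) from by push_cast; ring,
        gchoose_of_nat 0 (M+1), Nat.choose_eq_zero_of_lt (by omega)]
    norm_num
  have hflast : hf (M+2) = 0 := by
    simp only [hhf]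
    rw [gchoose_neg (by push_cast; omega : (M:ℤ)+1-((M+2:ℕ):ℤ) < 0)]
    norm_num
  rw [h3, Finset.sum_range_succ hf (M+2), hflast, hf0]
  ring

lemma key_rec (k r M : ℕ) (x : ℝ) :
    ∑ j ∈ Finset.range (M+1), (-1:ℝ)^(M+j) * tfun k r x ((M:ℤ) - j) * Gfun k r x j
      = Gfun k r x (M+1) := by
  have hP1 : ∀ s : ℕ,
      ∑ j ∈ Finset.range (M+1), (-1:ℝ)^(M+j) * ((gchoose ((r:ℤ)+1-k) ((M:ℤ)-j) : ℤ):ℝ)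
        * ((gchoose ((((k:ℤ)-1)*s + r) + j) ((j:ℤ)-s) : ℤ):ℝ)
      = (-1:ℝ)^(M+s) * ((gchoose (-(k:ℤ)*((s:ℤ)+1)) ((M:ℤ)-s) : ℤ):ℝ) := by
    intro s
    have h := alt_conv_r ((r:ℤ)+1-k) (((k:ℤ)-1)*s + r) M s
    rw [show ((r:ℤ)+1-k) - (((k:ℤ)-1)*s + r) - (s:ℤ) - 1 = -(k:ℤ)*((s:ℤ)+1) from by ring] at h
    exact h
  have hP2 : ∀ s : ℕ,
      ∑ j ∈ Finset.range (M+1), (-1:ℝ)^(M+j) * ((gchoose ((r:ℤ)+1) ((M:ℤ)-j+1) : ℤ):ℝ)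
        * ((gchoose ((((k:ℤ)-1)*s + r) + j) ((j:ℤ)-s) : ℤ):ℝ)
      = ((gchoose ((((k:ℤ)-1)*s + r) + ((M:ℤ)+1)) ((M:ℤ)+1-s) : ℤ):ℝ)
        + (-1:ℝ)^(M+s) * ((gchoose (-(k:ℤ)*s) ((M:ℤ)+1-s) : ℤ):ℝ) := by
    intro s
    have h := alt_conv_r ((r:ℤ)+1) (((k:ℤ)-1)*s + r) (M+1) s
    rw [show ((r:ℤ)+1) - (((k:ℤ)-1)*s + r) - (s:ℤ) - 1 = -(k:ℤ)*s from by ring] at h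
    push_cast at h
    rw [Finset.sum_range_succ] at h
    simp only [Nat.cast_add, Nat.cast_one] at h
    rw [show (M:ℤ)+1-((M:ℤ)+1) = 0 from by ring, gchoose_zero] at h
    rw [show M+1+(M+1) = 2*(M+1) from by omega, pow_mul] at h
    simp only [neg_one_sq, one_pow, mul_one, one_mul] at h
    have e : ∀ j ∈ Finset.range (M+1),
        (-1:ℝ)^(M+1+j) * ((gchoose ((r:ℤ)+1) ((M:ℤ)+1-j) : ℤ):ℝ)
          * ((gchoose (((k:ℤ)-1)*s + r + j) ((j:ℤ)-s) : ℤ):ℝ)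
        = -((-1:ℝ)^(M+j) * ((gchoose ((r:ℤ)+1) ((M:ℤ)-j+1) : ℤ):ℝ)
          * ((gchoose (((k:ℤ)-1)*s + r + j) ((j:ℤ)-s) : ℤ):ℝ)) := by
      intro j _
      rw [show M+1+j = (M+j)+1 from by omega, pow_succ,
          show (M:ℤ)+1-(j:ℤ) = (M:ℤ)-j+1 from by ring]
      ring
    rw [Finset.sum_congr rfl e, Finset.sum_neg_distrib] at h
    rw [show M+1+s = (M+s)+1 from by omega, pow_succ] at h
    linear_combination -h
  have hGj : ∀ j ∈ Finset.range (M+1), (-1:ℝ)^(M+j) * tfun k r x ((M:ℤ) - j) * Gfun k r x j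
      = (∑ s ∈ Finset.range (M+2),
          ((-1:ℝ)^(M+j) * ((gchoose ((r:ℤ)+1-k) ((M:ℤ)-j) : ℤ):ℝ)
            * ((gchoose ((((k:ℤ)-1)*s + r) + j) ((j:ℤ)-s) : ℤ):ℝ)) * (x^k * x^(k*s)))
        + ∑ s ∈ Finset.range (M+2),
          ((-1:ℝ)^(M+j) * ((gchoose ((r:ℤ)+1) ((M:ℤ)-j+1) : ℤ):ℝ)
            * ((gchoose ((((k:ℤ)-1)*s + r) + j) ((j:ℤ)-s) : ℤ):ℝ)) * x^(k*s) := by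
    intro j hj
    rw [Gfun_ext k r x j (M+1) (by simp only [Finset.mem_range] at hj; omega)]
    rw [tfun, Finset.mul_sum, ← Finset.sum_add_distrib]
    refine Finset.sum_congr rfl fun s _ => ?_
    ring
  rw [Finset.sum_congr rfl hGj, Finset.sum_add_distrib]
  have e1 : ∑ j ∈ Finset.range (M+1), ∑ s ∈ Finset.range (M+2),
        ((-1:ℝ)^(M+j) * ((gchoose ((r:ℤ)+1-k) ((M:ℤ)-j) : ℤ):ℝ)
          * ((gchoose ((((k:ℤ)-1)*s + r) + j) ((j:ℤ)-s) : ℤ):ℝ)) * (x^k * x^(k*s))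
      = ∑ s ∈ Finset.range (M+2),
        ((-1:ℝ)^(M+s) * ((gchoose (-(k:ℤ)*((s:ℤ)+1)) ((M:ℤ)-s) : ℤ):ℝ)) * (x^k * x^(k*s)) := by
    rw [Finset.sum_comm]
    refine Finset.sum_congr rfl fun s _ => ?_
    rw [← Finset.sum_mul, hP1 s]
  have e2 : ∑ j ∈ Finset.range (M+1), ∑ s ∈ Finset.range (M+2),
        ((-1:ℝ)^(M+j) * ((gchoose ((r:ℤ)+1) ((M:ℤ)-j+1) : ℤ):ℝ)
          * ((gchoose ((((k:ℤ)-1)*s + r) + j) ((j:ℤ)-s) : ℤ):ℝ)) * x^(k*s)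
      = (∑ s ∈ Finset.range (M+2),
          ((gchoose ((((k:ℤ)-1)*s + r) + ((M:ℤ)+1)) ((M:ℤ)+1-s) : ℤ):ℝ) * x^(k*s))
        + ∑ s ∈ Finset.range (M+2),
          ((-1:ℝ)^(M+s) * ((gchoose (-(k:ℤ)*s) ((M:ℤ)+1-s) : ℤ):ℝ)) * x^(k*s) := by
    rw [Finset.sum_comm, ← Finset.sum_add_distrib]
    refine Finset.sum_congr rfl fun s _ => ?_
    rw [← Finset.sum_mul, hP2 s]
    ring
  rw [e1, e2]
  have hc := hcancel k M x
  have hg : ∑ s ∈ Finset.range (M+2),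
      ((gchoose ((((k:ℤ)-1)*s + r) + ((M:ℤ)+1)) ((M:ℤ)+1-s) : ℤ):ℝ) * x^(k*s)
      = Gfun k r x (M+1) := by
    rw [Gfun]
    refine Finset.sum_congr rfl fun s _ => ?_
    rw [show (((k:ℤ)-1)*s + r) + ((M:ℤ)+1) = ((k:ℤ)-1)*s + r + ((M+1:ℕ):ℤ) from by push_cast; ring,
        show (M:ℤ)+1-(s:ℤ) = (((M+1:ℕ)):ℤ) - s from by push_cast; ring]
  linear_combination hc + hg

lemma toepDet_eq_Gfun (k r : ℕ) (x : ℝ) (n : ℕ) : toepDet (tfun k r x) n = Gfun k r x n := by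
  induction n using Nat.strong_induction_on with
  | _ n ih =>
    match n with
    | 0 => rw [toepDet_zero, Gfun_zero]
    | (M+1) =>
      rw [toepDet_succ _ (tfun_neg_one k r x) (fun d hd => tfun_lt_neg_one k r x d hd) M]
      rw [Finset.sum_congr rfl (fun j hj => by
        rw [ih j (by simp only [Finset.mem_range] at hj; omega)])]
      exact key_rec k r M x

lemma genFib_eq (k r n : ℕ) (hr : r < k) (x : ℝ) :
    genFib k (k*n + r) x = x^r * Gfun k r x n := by
  have hk : 1 ≤ k := by omega
  have hdiv : (k*n + r)/k = n := by
    rw [Nat.mul_add_div (by omega), Nat.div_eq_of_lt hr, add_zero]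
  rw [genFib, hdiv, ← Finset.sum_range_reflect, Gfun, Finset.mul_sum]
  refine Finset.sum_congr rfl fun s hs => ?_
  have hsn : s ≤ n := by simp only [Finset.mem_range] at hs; omega
  have hb1 : (k-1)*(n-s) ≤ k*n + r :=
    le_trans (Nat.mul_le_mul (Nat.sub_le _ _) (Nat.sub_le _ _)) (Nat.le_add_right _ _)
  have hb2 : k*(n-s) ≤ k*n + r :=
    le_trans (Nat.mul_le_mul_left _ (Nat.sub_le _ _)) (Nat.le_add_right _ _)
  have h1 : k*n + r - (k-1)*(n-s) = (k-1)*s + r + n := by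
    zify [hb1, hsn, hk]
    push_cast [Nat.cast_sub hk, Nat.cast_sub hsn]
    ring
  have h2 : k*n + r - k*(n-s) = k*s + r := by
    zify [hb2, hsn]
    push_cast [Nat.cast_sub hsn]
    ring
  have h3 : gchoose (((k:ℤ)-1)*s + r + n) ((n:ℤ)-s)
      = ((((k-1)*s + r + n).choose (n-s) : ℕ) : ℤ) := by
    rw [show ((k:ℤ)-1)*s + r + n = (((k-1)*s + r + n : ℕ):ℤ) from by
          push_cast [Nat.cast_sub hk]; ring,
        show (n:ℤ)-s = ((n-s:ℕ):ℤ) from by omega, gchoose_of_nat]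
  rw [Nat.add_sub_cancel, h1, h2, h3]
  push_cast
  rw [pow_add]
  ring

theorem det_eq_genFib_B (k r n : ℕ) (hr : r < k) (hn : 1 ≤ n) (x : ℝ) :
    x ^ r * Matrix.det (Matrix.of fun i j : Fin n =>
        (gchoose ((i : ℤ) - (k : ℤ) + 1 + (r : ℤ)) ((i : ℤ) - (j : ℤ)) : ℝ) * x ^ k +
        (gchoose ((i : ℤ) + 1 + (r : ℤ)) ((i : ℤ) - (j : ℤ) + 1) : ℝ)) = genFib k (k * n + r) x := by
  rw [detA_eq_toepDet, toepDet_eq_Gfun, genFib_eq k r n hr x]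
end

section
/- For n ≥ 1, det((C(i+k-1, j+k-1)·x^k − C(i, j-1))_{i,j=0}^{n-1}) = x^n · F^{(k)}_{(k-1)n}(x). -/
/-! ### Basic facts about `gchoose` -/

lemma gchoose_of_neg {a b : ℤ} (hb : b < 0) : gchoose a b = 0 := if_neg (not_le.2 hb)

lemma gchoose_nat (a : ℕ) {b : ℤ} (hb : 0 ≤ b) :
    gchoose a b = (a.choose b.toNat : ℤ) := by
  rw [gchoose, if_pos hb, Ring.choose_natCast]

lemma gchoose_zero_right (a : ℕ) : gchoose a 0 = 1 := by
  rw [gchoose_nat a le_rfl]; simp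

lemma gchoose_eq_zero_of_lt {a : ℕ} {b : ℤ} (h : (a : ℤ) < b) : gchoose a b = 0 := by
  rw [gchoose_nat a (le_of_lt ((Int.natCast_nonneg a).trans_lt h))]
  rw [Nat.choose_eq_zero_of_lt]
  · simp
  · omega

lemma gchoose_pascal (a : ℕ) (b : ℤ) :
    gchoose ((a : ℤ) + 1) b = gchoose a b + gchoose a (b - 1) := by
  rcases lt_trichotomy b 0 with hb | rfl | hb
  · rw [gchoose_of_neg hb, gchoose_of_neg hb, gchoose_of_neg (by omega)]; ring
  · rw [gchoose_of_neg (by norm_num : (0:ℤ) - 1 < 0)]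
    have : ((a : ℤ) + 1) = ((a + 1 : ℕ) : ℤ) := by push_cast; ring
    rw [this, gchoose_zero_right, gchoose_zero_right]; ring
  · have h1 : (0:ℤ) ≤ b := le_of_lt hb
    have h2 : (0:ℤ) ≤ b - 1 := by omega
    have : ((a : ℤ) + 1) = ((a + 1 : ℕ) : ℤ) := by push_cast; ring
    rw [this, gchoose_nat _ h1, gchoose_nat a h1, gchoose_nat a h2]
    have hb' : b.toNat = (b-1).toNat + 1 := by omega
    rw [hb', Nat.choose_succ_succ]
    push_cast; ring

lemma gchoose_symm (K r : ℕ) : gchoose (K : ℤ) ((K : ℤ) - r) = (K.choose r : ℤ) := by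
  rcases le_or_gt r K with h | h
  · rw [gchoose_nat K (by omega : (0:ℤ) ≤ (K:ℤ) - r)]
    congr 1
    rw [show ((K:ℤ) - r).toNat = K - r by omega, Nat.choose_symm h]
  · rw [gchoose_of_neg (by omega), Nat.choose_eq_zero_of_lt h]; simp

lemma gchoose_zero_zero : gchoose (0:ℤ) 0 = 1 := by
  have := gchoose_zero_right 0
  rwa [Nat.cast_zero] at this

lemma gchoose_zero_of_pos {b : ℤ} (hb : 0 < b) : gchoose (0:ℤ) b = 0 := by
  have := gchoose_eq_zero_of_lt (a := 0) (b := b) (by rwa [Nat.cast_zero])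
  rwa [Nat.cast_zero] at this

lemma pascal2 (a K : ℕ) (b : ℤ) :
    gchoose ((a:ℤ) + 1 + K) b = gchoose ((a:ℤ) + K) b + gchoose ((a:ℤ) + K) (b-1) := by
  have h := gchoose_pascal (a+K) b
  have e : ((a+K : ℕ) : ℤ) = (a:ℤ) + K := by push_cast; ring
  rw [e] at h
  rw [show (a:ℤ)+1+K = ((a:ℤ)+K)+1 by ring]
  exact h

open Finset Matrix

/-! ### The polynomial side -/

/-- `gg K x n` will turn out to equal `x^n * F^{(K+1)}_{K n}(x)`. -/
noncomputable def gg (K : ℕ) (x : ℝ) (n : ℕ) : ℝ :=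
  ∑ j ∈ range (n+1), (Nat.choose (K*(n-j)) j : ℝ) * x ^ ((K+1)*(n-j))

lemma gg_zero (K : ℕ) (x : ℝ) : gg K x 0 = 1 := by simp [gg]

/-- triangle sum swap -/
lemma tri_sum (f : ℕ → ℕ → ℝ) : ∀ n : ℕ,
    ∑ j ∈ range (n+1), ∑ t ∈ range (j+1), f t (j-t)
      = ∑ t ∈ range (n+1), ∑ u ∈ range (n+1-t), f t u := by
  intro n
  induction n with
  | zero => simp
  | succ n ih =>
    have h1 : ∀ t ∈ range (n+1), ∑ u ∈ range (n+2-t), f t u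
        = (∑ u ∈ range (n+1-t), f t u) + f t (n+1-t) := by
      intro t ht
      rw [mem_range] at ht
      rw [show n+2-t = (n+1-t)+1 by omega, sum_range_succ]
    have hr : ∑ t ∈ range (n+2), ∑ u ∈ range (n+2-t), f t u
        = (∑ t ∈ range (n+1), ∑ u ∈ range (n+1-t), f t u)
          + ((∑ t ∈ range (n+1), f t (n+1-t)) + f (n+1) 0) := by
      rw [sum_range_succ, sum_congr rfl h1, sum_add_distrib,
        show n+2-(n+1) = 1 by omega, sum_range_one]
      ring
    have hl : ∑ t ∈ range (n+2), f t (n+1-t)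
        = (∑ t ∈ range (n+1), f t (n+1-t)) + f (n+1) 0 := by
      rw [sum_range_succ, show n+1-(n+1) = 0 by omega]
    rw [show n+1+1 = n+2 by rfl, sum_range_succ, ih, hr, hl]

lemma gg_rec (K : ℕ) (x : ℝ) (n : ℕ) :
    gg K x (n+1) = ∑ t ∈ range (n+1), (Nat.choose K t : ℝ) * x^(K+1) * gg K x (n-t) := by
  have rhs_eq : ∀ t ∈ range (n+1),
      (Nat.choose K t : ℝ) * x^(K+1) * gg K x (n-t)
        = ∑ u ∈ range (n+1-t), (Nat.choose K t : ℝ) * (Nat.choose (K*(n-(t+u))) u : ℝ)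
            * x ^ ((K+1)*(n+1-(t+u))) := by
    intro t ht
    rw [mem_range] at ht
    rw [gg, mul_sum, show n-t+1 = n+1-t by omega]
    refine sum_congr rfl fun u hu => ?_
    rw [mem_range] at hu
    rw [show n - t - u = n - (t+u) by omega]
    rw [show (K+1)*(n+1-(t+u)) = (K+1) + (K+1)*(n-(t+u)) by
      rw [show n+1-(t+u) = (n-(t+u))+1 by omega]; ring]
    rw [pow_add]
    ring
  rw [sum_congr rfl rhs_eq, ← tri_sum (fun t u => (Nat.choose K t : ℝ)
    * (Nat.choose (K*(n-(t+u))) u : ℝ) * x ^ ((K+1)*(n+1-(t+u))))]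
  rw [gg, sum_range_succ]
  rw [show n+1-(n+1) = 0 by omega, Nat.mul_zero, Nat.choose_eq_zero_of_lt (by omega)]
  simp only [Nat.cast_zero, zero_mul, add_zero]
  refine sum_congr rfl fun j hj => ?_
  rw [mem_range] at hj
  have hv : K*(n+1-j) = K + K*(n-j) := by
    rw [show n+1-j = (n-j)+1 by omega]; ring
  rw [hv, Nat.add_choose_eq, Finset.Nat.sum_antidiagonal_eq_sum_range_succ_mk]
  push_cast
  rw [sum_mul]
  refine sum_congr rfl fun t ht => ?_
  rw [mem_range] at ht
  rw [show n - (t + (j-t)) = n - j by omega, show n+1 - (t+(j-t)) = n+1-j by omega]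

/-- relation to genFib -/
lemma gg_eq (K n : ℕ) (x : ℝ) : x^n * genFib (K+1) (K*n) x = gg K x n := by
  rw [genFib, mul_sum]
  simp only [Nat.add_sub_cancel]
  have hM : K*n/(K+1) + 1 ≤ n + 1 := by
    have : K*n/(K+1) ≤ n := Nat.div_le_of_le_mul (by nlinarith)
    omega
  have hzero : ∀ j, K*n < (K+1)*j → ((K*n - K*j).choose j : ℝ) = 0 := by
    intro j hjl
    have hh : (K+1)*j = K*j + j := by ring
    rcases Nat.eq_zero_or_pos j with rfl | hj1
    · simp at hjl
    have : K*n - K*j < j := by omega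
    rw [Nat.choose_eq_zero_of_lt this, Nat.cast_zero]
  have step1 : ∑ j ∈ range (K*n/(K+1)+1),
        x^n * ((Nat.choose (K*n - K*j) j : ℝ) * x ^ (K*n - (K+1)*j))
      = ∑ j ∈ range (n+1),
        x^n * ((Nat.choose (K*n - K*j) j : ℝ) * x ^ (K*n - (K+1)*j)) := by
    refine sum_subset (range_subset_range.2 hM) fun j _ hnj => ?_
    rw [mem_range, not_lt] at hnj
    have : K*n/(K+1) < j := by omega
    have hl : K*n < j*(K+1) := (Nat.div_lt_iff_lt_mul (by omega)).1 this
    rw [hzero j (by rw [mul_comm (K+1) j]; exact hl)]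
    ring
  rw [step1, gg]
  refine sum_congr rfl fun j hj => ?_
  rw [mem_range] at hj
  have e2 : K*(n-j) = K*n - K*j := Nat.mul_sub K n j
  rcases le_or_gt ((K+1)*j) (K*n) with hle | hlt
  · have h3 : n + (K*n - (K+1)*j) = (K+1)*(n-j) := by
      have h4 : (K+1)*(n-j) = (K+1)*n - (K+1)*j := Nat.mul_sub (K+1) n j
      have h5 : (K+1)*n = K*n + n := by ring
      omega
    rw [e2, ← h3, pow_add]
    ring
  · rw [e2, hzero j hlt]
    ring

/-! ### The matrix side -/

noncomputable def Amat (K r : ℕ) (x : ℝ) (n : ℕ) : Matrix (Fin n) (Fin n) ℝ :=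
  Matrix.of fun i j =>
    if (j : ℕ) = 0 then (gchoose ((i : ℤ) + K) ((K : ℤ) - r) : ℝ) * x ^ (K+1)
    else (gchoose ((i : ℤ) + K) ((j : ℤ) + K) : ℝ) * x ^ (K+1)
      - (gchoose (i : ℤ) ((j : ℤ) - 1) : ℝ)

lemma Amat_one (K r : ℕ) (x : ℝ) :
    (Amat K r x 1).det = (K.choose r : ℝ) * x ^ (K+1) := by
  rw [det_fin_one]
  simp [Amat, gchoose_symm]

lemma Amat_rec (K r n : ℕ) (x : ℝ) :
    (Amat K r x (n+2)).det
      = (K.choose r : ℝ) * x^(K+1) * (Amat K 0 x (n+1)).det + (Amat K (r+1) x (n+1)).det := by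
  set A := Amat K r x (n+2) with hA
  set B : Matrix (Fin (n+2)) (Fin (n+2)) ℝ :=
    Matrix.of (Fin.cons (α := fun _ => Fin (n+2) → ℝ) (A 0)
      (fun i j => A i.succ j - A i.castSucc j)) with hB
  have hB0 : ∀ j, B 0 j = A 0 j := fun j => by
    have : (Fin.cons (α := fun _ => Fin (n+2) → ℝ) (A 0)
        (fun i j => A i.succ j - A i.castSucc j)) 0 = A 0 := Fin.cons_zero _ _
    rw [hB, of_apply, this]
  have hBs : ∀ (i : Fin (n+1)) (j : Fin (n+2)), B i.succ j = A i.succ j - A i.castSucc j :=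
    fun i j => by
      have : (Fin.cons (α := fun _ => Fin (n+2) → ℝ) (A 0)
          (fun i j => A i.succ j - A i.castSucc j)) i.succ
          = fun j => A i.succ j - A i.castSucc j := Fin.cons_succ _ _ _
      rw [hB, of_apply, this]
  have hdet : A.det = B.det := by
    apply det_eq_of_forall_row_eq_smul_add_pred (fun _ => 1)
    · intro j; rw [hB0]
    · intro i j; rw [hBs]; ring
  have hstep : ∀ (i : Fin (n+1)) (j : Fin (n+2)), B i.succ j =
      if (j : ℕ) = 0 then (gchoose ((i:ℤ) + K) ((K:ℤ) - r - 1) : ℝ) * x ^ (K+1)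
      else (gchoose ((i:ℤ) + K) ((j:ℤ) + K - 1) : ℝ) * x ^ (K+1)
        - (gchoose ((i:ℤ)) ((j:ℤ) - 2) : ℝ) := by
    intro i j
    rw [hBs, hA]
    simp only [Amat, of_apply, Fin.val_succ, Fin.coe_castSucc]
    by_cases hj : (j : ℕ) = 0
    · rw [if_pos hj, if_pos hj, if_pos hj]
      push_cast
      rw [pascal2]
      push_cast
      ring
    · rw [if_neg hj, if_neg hj, if_neg hj]
      push_cast
      rw [pascal2, gchoose_pascal]
      push_cast
      ring
  have hB00 : B 0 0 = (K.choose r : ℝ) * x ^ (K+1) := by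
    rw [hB0, hA]
    simp only [Amat, of_apply, Fin.val_zero, if_pos rfl]
    push_cast
    rw [zero_add, gchoose_symm]
    push_cast
    ring
  have hB01 : B 0 1 = -1 := by
    rw [hB0, hA]
    simp only [Amat, of_apply]
    rw [if_neg (by simp : ¬((1 : Fin (n+2)) : ℕ) = 0)]
    have h1 : ((1 : Fin (n+2)) : ℤ) = 1 := by simp
    have h0 : ((0 : Fin (n+2)) : ℤ) = 0 := by simp
    rw [h1, h0, zero_add,
      gchoose_eq_zero_of_lt (by omega : (K:ℤ) < 1 + K),
      show (1:ℤ) - 1 = 0 by ring, gchoose_zero_zero]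
    push_cast; ring
  have hB0tail : ∀ j : Fin n, B 0 j.succ.succ = 0 := by
    intro j
    rw [hB0, hA]
    simp only [Amat, of_apply, Fin.val_succ]
    rw [if_neg (by omega)]
    have h0 : ((0 : Fin (n+2)) : ℤ) = 0 := by simp
    rw [h0]
    push_cast
    rw [zero_add, gchoose_eq_zero_of_lt (by omega : (K:ℤ) < (j:ℤ) + 1 + 1 + K),
      gchoose_zero_of_pos (by omega : (0:ℤ) < (j:ℤ)+1+1-1)]
    push_cast; ring
  have hS0 : B.submatrix Fin.succ (Fin.succAbove 0) = Amat K 0 x (n+1) := by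
    ext i j
    rw [submatrix_apply, Fin.succAbove_zero, hstep]
    rw [if_neg (by simp [Fin.val_succ])]
    simp only [Fin.val_succ]
    push_cast
    rw [show ((j:ℤ)+1)+(K:ℤ)-1 = (j:ℤ)+K by ring, show ((j:ℤ)+1)-2 = (j:ℤ)-1 by ring]
    simp only [Amat, of_apply]
    by_cases hj : (j : ℕ) = 0
    · rw [if_pos hj]
      have hj' : ((j:ℕ) : ℤ) = 0 := by rw [hj]; rfl
      rw [hj', gchoose_of_neg (by omega : (0:ℤ)-1 < 0)]
      push_cast
      ring
    · rw [if_neg hj]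
  have hS1 : B.submatrix Fin.succ (Fin.succAbove 1) = Amat K (r+1) x (n+1) := by
    ext i j
    rw [submatrix_apply]
    by_cases hj : (j : ℕ) = 0
    · have hj0 : j = 0 := Fin.ext hj
      subst hj0
      rw [show (1 : Fin (n+2)).succAbove 0 = 0 from
        Fin.succAbove_of_castSucc_lt _ _ (by simp)]
      rw [hstep, if_pos (by simp)]
      simp only [Amat, of_apply, if_pos (by simp : ((0 : Fin (n+1)) : ℕ) = 0)]
      push_cast
      ring_nf
    · rw [show (1 : Fin (n+2)).succAbove j = j.succ from
        Fin.succAbove_of_le_castSucc _ _ (by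
          rw [Fin.le_castSucc_iff]
          simp only [Fin.lt_iff_val_lt_val, Fin.val_one, Fin.val_succ]
          omega)]
      rw [hstep, if_neg (by simp [Fin.val_succ])]
      simp only [Fin.val_succ]
      push_cast
      rw [show ((j:ℤ)+1)+(K:ℤ)-1 = (j:ℤ)+K by ring, show ((j:ℤ)+1)-2 = (j:ℤ)-1 by ring]
      simp only [Amat, of_apply, if_neg hj]
  rw [hdet, det_succ_row_zero, Fin.sum_univ_succ, Fin.sum_univ_succ]
  have htail : ∀ j : Fin n,
      (-1:ℝ)^((j.succ.succ : Fin (n+2)) : ℕ) * B 0 j.succ.succ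
        * (B.submatrix Fin.succ (j.succ.succ).succAbove).det = 0 := by
    intro j; rw [hB0tail]; ring
  rw [Finset.sum_congr rfl (fun j _ => htail j), Finset.sum_const_zero]
  rw [Fin.succ_zero_eq_one, hB00, hB01, hS0, hS1]
  simp only [Fin.val_zero, Fin.val_one, pow_zero, pow_one]
  ring

lemma Amat_det (K : ℕ) (x : ℝ) : ∀ n r, (Amat K r x (n+1)).det
    = ∑ t ∈ range (n+1), (Nat.choose K (r+t) : ℝ) * x^(K+1) * gg K x (n-t) := by
  intro n
  induction n with
  | zero =>
    intro r
    rw [Amat_one, sum_range_one, Nat.sub_zero, gg_zero, Nat.add_zero]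
    ring
  | succ n ih =>
    intro r
    rw [Amat_rec, ih 0, ih (r+1)]
    have h0 : ∑ t ∈ range (n+1), (Nat.choose K (0+t) : ℝ) * x^(K+1) * gg K x (n-t)
        = gg K x (n+1) := by
      rw [gg_rec]
      exact sum_congr rfl fun t _ => by rw [Nat.zero_add]
    rw [h0, sum_range_succ' (fun t => (Nat.choose K (r+t) : ℝ) * x^(K+1) * gg K x (n+1-t))]
    have h1 : ∀ t ∈ range (n+1), (Nat.choose K (r+(t+1)) : ℝ) * x^(K+1) * gg K x (n+1-(t+1))
        = (Nat.choose K (r+1+t) : ℝ) * x^(K+1) * gg K x (n-t) := by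
      intro t _
      rw [show r+(t+1) = r+1+t by omega, show n+1-(t+1) = n-t by omega]
    rw [sum_congr rfl h1]; simp only [Nat.add_zero, Nat.sub_zero]; rw [add_comm]

theorem det_eq_genFib_D (k n : ℕ) (hk : 1 ≤ k) (hn : 1 ≤ n) (x : ℝ) :
    Matrix.det (Matrix.of fun i j : Fin n =>
        (gchoose ((i : ℤ) + (k : ℤ) - 1) ((j : ℤ) + (k : ℤ) - 1) : ℝ) * x ^ k -
        (gchoose (i : ℤ) ((j : ℤ) - 1) : ℝ)) = x ^ n * genFib k ((k - 1) * n) x := by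
  obtain ⟨K, rfl⟩ : ∃ K, k = K + 1 := ⟨k-1, by omega⟩
  obtain ⟨N, rfl⟩ : ∃ N, n = N + 1 := ⟨n-1, by omega⟩
  have hM : (Matrix.of fun i j : Fin (N+1) =>
        (gchoose ((i : ℤ) + ((K+1 : ℕ) : ℤ) - 1) ((j : ℤ) + ((K+1 : ℕ) : ℤ) - 1) : ℝ)
          * x ^ (K+1) - (gchoose (i : ℤ) ((j : ℤ) - 1) : ℝ))
      = Amat K 0 x (N+1) := by
    ext i j
    simp only [Amat, of_apply]
    push_cast
    rw [show (i:ℤ) + ((K:ℤ)+1) - 1 = (i:ℤ) + K by ring,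
      show (j:ℤ) + ((K:ℤ)+1) - 1 = (j:ℤ) + K by ring]
    by_cases hj : (j : ℕ) = 0
    · rw [if_pos hj]
      have hj' : ((j:ℕ) : ℤ) = 0 := by rw [hj]; rfl
      rw [hj', gchoose_of_neg (by omega : (0:ℤ)-1 < 0), zero_add, sub_zero]
      push_cast
      ring
    · rw [if_neg hj]
  rw [hM, Amat_det K x N 0]
  have h0 : ∑ t ∈ range (N+1), (Nat.choose K (0+t) : ℝ) * x^(K+1) * gg K x (N-t)
      = gg K x (N+1) := by
    rw [gg_rec]
    exact sum_congr rfl fun t _ => by rw [Nat.zero_add]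
  rw [h0, show K+1-1 = K by omega, gg_eq]
end
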